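/- arXiv:2102.09288 — 2 statements merged into one kernel-verified Lean document; each statement's English description precedes it below -/
import Mathlib

section
/- There exists a real number λ₀ > 0 such that, for any two independent random variables X and Y on a probability space, each having the Poisson distribution with mean λ₀, one has ℙ(X = Y) = 1/3, ℙ(X > Y) = 1/3 and ℙ(X < Y) = 1/3. -/
open MeasureTheory ProbabilityTheory Set
open scoped NNReal ENNReal Nat

/-!
For independent `X, Y` with common law `μ` on a countable linear order, `ℙ(X = Y) = ∑ μ{n}²`,
and swapping `X` and `Y` shows `ℙ(X > Y) = ℙ(X < Y)`, so all three probabilities are `1/3`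
as soon as `ℙ(X = Y)` is. For Poisson laws, `ℙ(X = Y)` depends continuously on the mean `λ`; it
equals `1` at `λ = 0` and at `λ = 2` it is at most the largest atom `2e⁻² < 1/3`, so the
intermediate value theorem produces the required `λ₀`.
-/

lemma ProbabilityTheory.HasLaw.of_map_eq {Ω 𝓧 : Type*} [MeasurableSpace Ω] [MeasurableSpace 𝓧]
    {X : Ω → 𝓧} {μ : Measure 𝓧} {P : Measure Ω} [NeZero μ] (h : P.map X = μ) : HasLaw X μ P :=
  ⟨.of_map_ne_zero (h ▸ NeZero.ne μ), h⟩

section Countable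

variable {α : Type*} [MeasurableSpace α] [Countable α] [MeasurableSingletonClass α]

lemma measure_prod_diagonal_eq_lintegral (μ ν : Measure α) [SFinite ν] :
    (μ.prod ν) {p | p.1 = p.2} = ∫⁻ a, ν {a} ∂μ := by
  rw [Measure.prod_apply (to_countable _).measurableSet]
  congr! with a
  ext b
  simp [eq_comm]

lemma measure_prod_diagonal_le {μ ν : Measure α} [IsProbabilityMeasure μ] [SFinite ν] {c : ℝ≥0∞}
    (h : ∀ a, ν {a} ≤ c) : (μ.prod ν) {p | p.1 = p.2} ≤ c :=
  calc (μ.prod ν) {p | p.1 = p.2} = ∫⁻ a, ν {a} ∂μ := measure_prod_diagonal_eq_lintegral μ ν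
    _ ≤ ∫⁻ _, c ∂μ := lintegral_mono h
    _ = c := by simp

lemma measureReal_prod_diagonal (μ ν : Measure α) [IsFiniteMeasure μ] [IsFiniteMeasure ν] :
    (μ.prod ν).real {p | p.1 = p.2} = ∑' a, μ.real {a} * ν.real {a} := by
  rw [measureReal_def, measure_prod_diagonal_eq_lintegral, lintegral_countable',
    ENNReal.tsum_toReal_eq fun a => by finiteness]
  simp [measureReal_def, mul_comm]

variable [LinearOrder α] (μ : Measure α)

lemma measure_prod_gt_eq_lt [SFinite μ] :
    (μ.prod μ) {p | p.2 < p.1} = (μ.prod μ) {p | p.1 < p.2} :=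
  Measure.measurePreserving_swap.measure_preimage (s := {p : α × α | p.1 < p.2})
    (to_countable _).measurableSet.nullMeasurableSet

lemma measure_prod_diagonal_add_two_mul_lt [IsProbabilityMeasure μ] :
    (μ.prod μ) {p | p.1 = p.2} + 2 * (μ.prod μ) {p | p.1 < p.2} = 1 := by
  have hcover : {p : α × α | p.1 = p.2} ∪ ({p | p.1 < p.2} ∪ {p | p.2 < p.1}) = univ := by
    ext p
    have := lt_trichotomy p.1 p.2
    simp only [mem_union, mem_ofPred_eq, mem_univ, iff_true]
    tauto
  have hlt_gt : Disjoint {p : α × α | p.1 < p.2} {p | p.2 < p.1} :=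
    disjoint_left.2 fun p h h' => lt_asymm h h'
  have heq_ne : Disjoint {p : α × α | p.1 = p.2} ({p | p.1 < p.2} ∪ {p | p.2 < p.1}) := by
    refine disjoint_left.2 fun p (h : p.1 = p.2) h' => ?_
    rcases h' with h' | h' <;> simp_all
  rw [← measure_univ (μ := μ.prod μ), ← hcover,
    measure_union heq_ne (to_countable _).measurableSet,
    measure_union hlt_gt (to_countable _).measurableSet, measure_prod_gt_eq_lt, two_mul]

lemma measure_prod_lt_eq_third_of_diagonal [IsProbabilityMeasure μ]
    (h : (μ.prod μ) {p | p.1 = p.2} = 1 / 3) : (μ.prod μ) {p | p.1 < p.2} = 1 / 3 := by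
  have hthirds : (1 / 3 : ℝ≥0∞) + 2 * (1 / 3) = 1 := by
    rw [two_mul, ← add_assoc, ENNReal.add_thirds]
  have := (measure_prod_diagonal_add_two_mul_lt μ).trans hthirds.symm
  rwa [h, ENNReal.add_right_inj (by simp), ENNReal.mul_right_inj (by simp) (by simp)] at this

end Countable

lemma exp_neg_mul_pow_div_factorial_le_one (r : ℝ≥0) (n : ℕ) : Real.exp (-r) * r ^ n / n ! ≤ 1 := by
  simpa [poissonMeasure_real_singleton] using measureReal_le_one (μ := Po(r)) (s := {n})

lemma measureReal_prod_diagonal_poissonMeasure (r : ℝ≥0) :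
    (Po(r).prod Po(r)).real {p | p.1 = p.2} = ∑' n, (Real.exp (-r) * r ^ n / n !) ^ 2 := by
  simp only [measureReal_prod_diagonal, poissonMeasure_real_singleton, sq]

lemma measureReal_prod_diagonal_poissonMeasure_zero :
    (Po(0).prod Po(0)).real {p | p.1 = p.2} = 1 := by
  rw [measureReal_prod_diagonal_poissonMeasure, tsum_eq_single 0 fun n hn => by simp [hn]]
  simp

lemma continuousOn_measureReal_prod_diagonal_poissonMeasure (R : ℝ≥0) :
    ContinuousOn (fun r : ℝ≥0 => (Po(r).prod Po(r)).real {p | p.1 = p.2}) (Icc 0 R) := by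
  simp only [measureReal_prod_diagonal_poissonMeasure]
  refine continuousOn_tsum (fun n => by fun_prop) (Real.summable_pow_div_factorial R)
    fun n r hr => ?_
  have hp : 0 ≤ Real.exp (-r) * r ^ n / n ! := by positivity
  calc ‖(Real.exp (-r) * r ^ n / n !) ^ 2‖ ≤ Real.exp (-r) * r ^ n / n ! := by
        rw [Real.norm_eq_abs, abs_of_nonneg (by positivity), sq]
        exact mul_le_of_le_one_left hp (exp_neg_mul_pow_div_factorial_le_one r n)
    _ ≤ 1 * (R : ℝ) ^ n / n ! := by
        gcongr
        · exact Real.exp_le_one_iff.2 (by simp)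
        · exact hr.2
    _ = (R : ℝ) ^ n / n ! := by rw [one_mul]

lemma two_pow_le_two_mul_factorial (n : ℕ) : 2 ^ n ≤ 2 * n ! := by
  rcases n with _ | m
  · simp
  · have h : 1 ! * 2 ^ m ≤ (1 + m)! := Nat.factorial_mul_pow_le_factorial
    rw [Nat.factorial_one, one_mul, add_comm] at h
    rw [pow_succ']
    omega

lemma poissonMeasure_two_singleton_le (n : ℕ) :
    Po(2) {n} ≤ ENNReal.ofReal (2 * Real.exp (-2)) := by
  rw [poissonMeasure_singleton]
  refine ENNReal.ofReal_le_ofReal ?_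
  have : (2 : ℝ) ^ n / n ! ≤ 2 := by
    rw [div_le_iff₀ (by positivity)]
    exact_mod_cast two_pow_le_two_mul_factorial n
  push_cast
  rw [mul_div_assoc, mul_comm 2]
  gcongr

lemma two_mul_exp_neg_two_lt_third : 2 * Real.exp (-2) < 1 / 3 := by
  have : (6 : ℝ) < Real.exp 2 := by
    have := Real.exp_one_gt_d9
    have : Real.exp 2 = Real.exp 1 * Real.exp 1 := by rw [← Real.exp_add]; norm_num
    nlinarith
  rw [Real.exp_neg, ← div_eq_mul_inv, div_lt_div_iff₀ (by positivity) (by norm_num)]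
  linarith

lemma exists_pos_measureReal_prod_diagonal_poissonMeasure_eq_third :
    ∃ r : ℝ≥0, 0 < r ∧ (Po(r).prod Po(r)).real {p | p.1 = p.2} = 1 / 3 := by
  have htwo : (Po(2).prod Po(2)).real {p | p.1 = p.2} < 1 / 3 :=
    (ENNReal.toReal_le_of_le_ofReal (by positivity)
      (measure_prod_diagonal_le poissonMeasure_two_singleton_le)).trans_lt
      two_mul_exp_neg_two_lt_third
  obtain ⟨r, -, hr⟩ := intermediate_value_Icc' zero_le
    (continuousOn_measureReal_prod_diagonal_poissonMeasure 2)
    ⟨htwo.le, by rw [measureReal_prod_diagonal_poissonMeasure_zero]; norm_num⟩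
  refine ⟨r, pos_iff_ne_zero.2 ?_, hr⟩
  rintro rfl
  norm_num [measureReal_prod_diagonal_poissonMeasure_zero] at hr

/-- There exists `λ₀ > 0` such that for any two independent `Poisson(λ₀)` random
variables `X, Y` on a probability space, a win, draw and loss are all equally likely:
`P(X = Y) = P(X > Y) = P(X < Y) = 1/3`. -/
theorem exists_lambda_equal_outcomes :
    ∃ lam₀ : NNReal, 0 < lam₀ ∧
      ∀ (Ω : Type) (_ : MeasurableSpace Ω) (P : Measure Ω), IsProbabilityMeasure P →
        ∀ (X Y : Ω → ℕ), IndepFun X Y P →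
          Measure.map X P = poissonMeasure lam₀ →
          Measure.map Y P = poissonMeasure lam₀ →
          P {ω | X ω = Y ω} = 1/3 ∧ P {ω | X ω > Y ω} = 1/3 ∧ P {ω | X ω < Y ω} = 1/3 := by
  obtain ⟨r, hr, htie⟩ := exists_pos_measureReal_prod_diagonal_poissonMeasure_eq_third
  refine ⟨r, hr, fun Ω _ P _ X Y hXY hX hY => ?_⟩
  have hpair := hXY.hasLaw_prod (.of_map_eq hX) (.of_map_eq hY)
  have hdiag : (Po(r).prod Po(r)) {p | p.1 = p.2} = 1 / 3 := by
    rw [← ofReal_measureReal, htie, ENNReal.ofReal_div_of_pos (by norm_num)]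
    simp
  have hlt := measure_prod_lt_eq_third_of_diagonal _ hdiag
  refine ⟨?_, ?_, ?_⟩
  · exact (hpair.measure_eq (p := fun q => q.1 = q.2) (to_countable _).measurableSet).trans hdiag
  · exact (hpair.measure_eq (p := fun q => q.2 < q.1) (to_countable _).measurableSet).trans
      ((measure_prod_gt_eq_lt _).trans hlt)
  · exact (hpair.measure_eq (p := fun q => q.1 < q.2) (to_countable _).measurableSet).trans hlt
end

section
/- Define d(λ) = e^{-2λ} Σ_{k=0}^∞ λ^{2k} / (k!)² for λ ≥ 0. Then d(λ) tends to 0 as λ tends to +∞. -/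
/-!
Write `d(λ) = ∑ₖ pₖ²` with `pₖ = e^{-λ} λ^k / k!` the Poisson weights. Since `∑ₖ pₖ = 1`,
`d(λ) ≤ maxₖ pₖ`. The weights increase as long as `k ≤ λ`, and for `k ≥ 1` Stirling's lower bound
`k! ≥ √(2πk) (k/e)^k` together with `λ^k e^{-λ} ≤ k^k e^{-k}` gives `pₖ ≤ 1/√(2πk)`. Hence
`maxₖ pₖ ≤ 1/√(2π⌊λ⌋)`, which tends to `0`.
-/

/-- The probability of a draw between two independent `Poisson(λ)` random variables:
`d(λ) = e^{-2λ} ∑_{k} λ^{2k} / (k!)²`. -/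
noncomputable def drawProb (lam : ℝ) : ℝ :=
  Real.exp (-2 * lam) * ∑' k : ℕ, lam ^ (2 * k) / (Nat.factorial k : ℝ) ^ 2

open Real Filter Topology Nat

theorem pow_mul_exp_neg_le_pow_mul_exp_neg {x : ℝ} (hx : 0 ≤ x) (k : ℕ) :
    x ^ k * exp (-x) ≤ k ^ k * exp (-k) := by
  rcases eq_or_ne k 0 with rfl | hk
  · simpa using hx
  have hk' : (0 : ℝ) < k := by positivity
  have hratio : (x / k) ^ k ≤ exp (x - k) := by
    calc (x / k) ^ k ≤ exp (x / k - 1) ^ k :=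
          pow_le_pow_left₀ (by positivity) (by linarith [add_one_le_exp (x / k - 1)]) k
      _ = exp (x - k) := by rw [← exp_nat_mul]; congr 1; field_simp
  calc x ^ k * exp (-x) = k ^ k * (x / k) ^ k * exp (-x) := by rw [div_pow]; field_simp
    _ ≤ k ^ k * exp (x - k) * exp (-x) := by gcongr
    _ = k ^ k * exp (-k) := by rw [mul_assoc, ← exp_add]; ring_nf

theorem tsum_sq_le_of_hasSum_one {ι : Type*} {p : ι → ℝ} {B : ℝ} (hp0 : ∀ i, 0 ≤ p i)
    (hp : HasSum p 1) (hB : ∀ i, p i ≤ B) : ∑' i, p i ^ 2 ≤ B := by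
  have hle : ∀ i, p i ^ 2 ≤ B * p i := fun i => by
    rw [sq]; exact mul_le_mul_of_nonneg_right (hB i) (hp0 i)
  have hsum : HasSum (fun i => B * p i) B := by simpa using hp.mul_left B
  exact hasSum_le hle (hsum.summable.of_nonneg_of_le (fun i => sq_nonneg _) hle).hasSum hsum

noncomputable def poissonWeight (lam : ℝ) (k : ℕ) : ℝ := exp (-lam) * lam ^ k / k !

section poissonWeight

variable {lam : ℝ}

theorem poissonWeight_nonneg (hlam : 0 ≤ lam) (k : ℕ) : 0 ≤ poissonWeight lam k := by
  unfold poissonWeight; positivity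

theorem hasSum_poissonWeight (hlam : 0 ≤ lam) : HasSum (poissonWeight lam) 1 :=
  ProbabilityTheory.hasSum_one_poissonMeasure ⟨lam, hlam⟩

theorem poissonWeight_succ (lam : ℝ) (k : ℕ) :
    poissonWeight lam (k + 1) = poissonWeight lam k * (lam / (k + 1)) := by
  simp only [poissonWeight, factorial_succ, cast_mul, cast_succ, pow_succ]
  field_simp

theorem poissonWeight_le_poissonWeight {k m : ℕ} (hkm : k ≤ m) (hm : (m : ℝ) ≤ lam) :
    poissonWeight lam k ≤ poissonWeight lam m := by
  induction m, hkm using Nat.le_induction with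
  | base => rfl
  | succ m _ ih =>
    push_cast at hm
    have hm' : 0 < (m : ℝ) + 1 := by positivity
    calc poissonWeight lam k ≤ poissonWeight lam m := ih (by linarith)
      _ ≤ poissonWeight lam m * (lam / (m + 1)) :=
          le_mul_of_one_le_right (poissonWeight_nonneg (by linarith) m) ((one_le_div hm').2 hm)
      _ = poissonWeight lam (m + 1) := (poissonWeight_succ lam m).symm

theorem poissonWeight_le_inv_sqrt (hlam : 0 ≤ lam) {k : ℕ} (hk : k ≠ 0) :
    poissonWeight lam k ≤ (√(2 * π * k))⁻¹ := by
  calc poissonWeight lam k = lam ^ k * exp (-lam) / k ! := by rw [poissonWeight, mul_comm]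
    _ ≤ k ^ k * exp (-k) / k ! :=
        div_le_div_of_nonneg_right (pow_mul_exp_neg_le_pow_mul_exp_neg hlam k) (by positivity)
    _ ≤ k ^ k * exp (-k) / (√(2 * π * k) * (k / exp 1) ^ k) := by
        gcongr; exact Stirling.le_factorial_stirling k
    _ = (√(2 * π * k))⁻¹ := by
        rw [div_pow, exp_one_pow, exp_neg]
        field_simp

theorem poissonWeight_le_inv_sqrt_floor (hlam : 1 ≤ lam) (k : ℕ) :
    poissonWeight lam k ≤ (√(2 * π * ⌊lam⌋₊))⁻¹ := by
  have hm : 1 ≤ ⌊lam⌋₊ := Nat.one_le_floor_iff lam |>.2 hlam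
  rcases le_or_gt k ⌊lam⌋₊ with hk | hk
  · exact (poissonWeight_le_poissonWeight hk (Nat.floor_le (by linarith))).trans
      (poissonWeight_le_inv_sqrt (by linarith) (by omega))
  · refine (poissonWeight_le_inv_sqrt (by linarith) (by omega)).trans ?_
    gcongr

end poissonWeight

theorem drawProb_eq_tsum_sq (lam : ℝ) : drawProb lam = ∑' k, poissonWeight lam k ^ 2 := by
  rw [drawProb, ← tsum_mul_left]
  refine tsum_congr fun k => ?_
  rw [poissonWeight, div_pow, mul_pow, ← exp_nat_mul, pow_mul]
  ring_nf

/-- `d(λ) → 0` as `λ → ∞`. -/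
theorem drawProb_tendsto_zero :
    Filter.Tendsto drawProb Filter.atTop (nhds 0) := by
  have hbound : Tendsto (fun lam : ℝ => (√(2 * π * ⌊lam⌋₊))⁻¹) atTop (𝓝 0) :=
    tendsto_inv_atTop_zero.comp <| tendsto_sqrt_atTop.comp <|
      (tendsto_natCast_atTop_atTop.comp tendsto_nat_floor_atTop).const_mul_atTop (by positivity)
  refine squeeze_zero' (.of_forall fun lam => ?_) ?_ hbound
  · rw [drawProb_eq_tsum_sq]
    exact tsum_nonneg fun k => sq_nonneg _
  filter_upwards [eventually_ge_atTop 1] with lam hlam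
  have hlam0 : 0 ≤ lam := by linarith
  rw [drawProb_eq_tsum_sq]
  exact tsum_sq_le_of_hasSum_one (poissonWeight_nonneg hlam0) (hasSum_poissonWeight hlam0)
    (poissonWeight_le_inv_sqrt_floor hlam)
end
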